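/- For pattern (SEQ(A+,B))+ under the contiguous semantics, the pattern-grained algorithm that resets the last-event count to 0 upon any non-matching event correctly counts contiguous trends; on the stream a1,b2,a3,a4,c5,b6,a7,b8 the final count is 2. -/

import Mathlib

attribute [local instance] Classical.propDecidable

inductive Lab where
  | A | B | C
deriving DecidableEq

/-- A block matched by `SEQ(A+, B)`: one or more `A`s followed by one `B`. -/
inductive Blk : List Lab → Prop where
  | mk (k : ℕ) (hk : 1 ≤ k) : Blk (List.replicate k Lab.A ++ [Lab.B])

/-- A trend matched by `(SEQ(A+, B))+`: a concatenation of one or more blocks. -/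
inductive Pat : List Lab → Prop where
  | one {s : List Lab} : Blk s → Pat s
  | cons {s t : List Lab} : Blk s → Pat t → Pat (s ++ t)

/-- A contiguous trend: a consecutive run (infix) of the position-labelled stream whose
labels match the pattern `(SEQ(A+,B))+`. -/
def ContTrend (stream tr : List (ℕ × Lab)) : Prop :=
  tr <:+: stream ∧ Pat (tr.map Prod.snd)

/-- The pattern-grained algorithm under the contiguous semantics for `(SEQ(A+,B))+`.
As under skip-till-next-match, except that upon any non-matching event the last matched
event and its count are reset to null/0, while the final count is retained. -/
def stepCont (s : Option Lab × ℕ × ℕ) (x : Lab) : Option Lab × ℕ × ℕ :=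
  match x with
  | Lab.A => (some Lab.A,
      1 + (if s.1 = some Lab.A ∨ s.1 = some Lab.B then s.2.1 else 0), s.2.2)
  | Lab.B => if s.1 = some Lab.A then (some Lab.B, s.2.1, s.2.2 + s.2.1)
             else (none, 0, s.2.2)
  | Lab.C => (none, 0, s.2.2)

/-!
After a prefix `p` of the stream, the running count of the algorithm is the number of
suffixes of `p` that are trends or partial trends awaiting a closing `B`, and its final count
is the number of infixes of `p` that are trends. Appending one event changes these counts by
recurrences read off from how trends and partial trends extend by one letter, and these
recurrences are exactly the update rule `stepCont`. Since the positions make all events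
distinct, the contiguous trends of the indexed stream correspond one-to-one to the matching
infixes of its label sequence.
-/

namespace List

variable {α : Type*}

theorem countP_or_eq_add {l : List α} {p q : α → Bool} (h : ∀ a ∈ l, ¬(p a ∧ q a)) :
    l.countP (fun a => p a || q a) = l.countP p + l.countP q := by
  induction l with
  | nil => rfl
  | cons a l ih =>
    have hpq := h a mem_cons_self
    simp only [countP_cons, ih fun b hb => h b (mem_cons_of_mem a hb)]
    by_cases hp : p a <;> by_cases hq : q a <;> simp_all <;> omega

theorem countP_tails_append_singleton {q : List α → Bool} (hq : q [] = false) (p : List α)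
    (x : α) : (p ++ [x]).tails.countP q = p.tails.countP fun t => q (t ++ [x]) := by
  simp [countP_map, hq, Function.comp_def]

theorem countP_eq_nil_tails (p : List α) : p.tails.countP (fun t => t = []) = 1 := by
  induction p with
  | nil => rfl
  | cons a l ih => simp [ih]

theorem nodup_tails : ∀ l : List α, l.tails.Nodup
  | [] => by simp
  | a :: l => by
    rw [tails_cons, nodup_cons]
    refine ⟨fun h => ?_, nodup_tails l⟩
    simpa using ((mem_tails _ _).1 h).length_le

theorem mem_flatMap_inits_tails {l t : List α} : t ∈ l.inits.flatMap tails ↔ t <:+: l := by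
  simp only [mem_flatMap, mem_inits, mem_tails]
  constructor
  · rintro ⟨u, hu, ht⟩
    exact ht.isInfix.trans hu.isInfix
  · rintro ⟨s, r, rfl⟩
    exact ⟨s ++ t, prefix_append _ _, suffix_append _ _⟩

theorem Nodup.nodup_filter_flatMap_inits_tails {e : List α} (he : e.Nodup) {P : List α → Bool}
    (hP : P [] = false) : ((e.inits.flatMap tails).filter P).Nodup := by
  induction e using reverseRecOn with
  | nil => simp [hP]
  | append_singleton p x ih =>
    obtain ⟨hp, -, hx⟩ := nodup_append.1 he
    rw [show (p ++ [x]).inits = p.inits ++ [p ++ [x]] by simp, flatMap_append, flatMap_singleton,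
      filter_append]
    refine nodup_append.2 ⟨ih hp, (nodup_tails _).filter P, ?_⟩
    rintro a ha _ hb rfl
    rw [mem_filter, mem_flatMap_inits_tails] at ha
    rw [mem_filter, mem_tails] at hb
    have ha0 : a ≠ [] := by rintro rfl; simp [hP] at ha
    have hxa : x ∈ a := by
      simpa [hb.1.getLast ha0] using getLast_mem ha0
    exact hx x (ha.1.subset hxa) x (mem_singleton_self x) rfl

theorem Nodup.countP_sublists_eq_countP_flatMap_inits_tails {e : List α} (he : e.Nodup)
    {P : List α → Bool} (hP : P [] = false) (hinfix : ∀ t, P t → t <:+: e) :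
    e.sublists.countP P = (e.inits.flatMap tails).countP P := by
  simp only [countP_eq_length_filter]
  refine Perm.length_eq <| (perm_ext_iff_of_nodup (he.sublists.filter P)
    (he.nodup_filter_flatMap_inits_tails hP)).2 fun t => ?_
  simp only [mem_filter, mem_sublists, mem_flatMap_inits_tails]
  exact ⟨fun h => ⟨hinfix t h.2, h.2⟩, fun h => ⟨h.1.sublist, h.2⟩⟩

theorem flatMap_inits_tails_map {β : Type*} (f : α → β) (l : List α) :
    (l.map f).inits.flatMap tails = (l.inits.flatMap tails).map (map f) := by
  simp [map_inits, map_tails, flatMap_map, map_flatMap]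

end List

/-- Partial trends awaiting a closing `B`. -/
inductive OpenPat : List Lab → Prop where
  | as (k : ℕ) (hk : 1 ≤ k) : OpenPat (List.replicate k Lab.A)
  | cons {s t : List Lab} : Blk s → OpenPat t → OpenPat (s ++ t)

theorem Pat.getLast?_eq {s : List Lab} (h : Pat s) : s.getLast? = some Lab.B := by
  induction h with
  | one hb => obtain ⟨k, -⟩ := hb; simp
  | cons _ _ ih => simp [List.getLast?_append, ih]

theorem OpenPat.getLast?_eq {s : List Lab} (h : OpenPat s) : s.getLast? = some Lab.A := by
  induction h with
  | as k hk => simp [List.getLast?_replicate]; omega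
  | cons _ _ ih => simp [List.getLast?_append, ih]

theorem not_pat_nil : ¬Pat [] := fun h => by simpa using h.getLast?_eq

theorem not_openPat_nil : ¬OpenPat [] := fun h => by simpa using h.getLast?_eq

theorem Pat.not_openPat {s : List Lab} (h : Pat s) : ¬OpenPat s := fun ho => by
  simpa [h.getLast?_eq] using ho.getLast?_eq

theorem pat_append_B_iff {t : List Lab} : Pat (t ++ [Lab.B]) ↔ OpenPat t := by
  constructor
  · suffices ∀ s, Pat s → ∀ t, s = t ++ [Lab.B] → OpenPat t from fun h => this _ h t rfl
    intro s hs
    induction hs with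
    | one hb =>
      obtain ⟨k, hk⟩ := hb
      intro t ht
      rw [List.append_cancel_right ht.symm]
      exact OpenPat.as k hk
    | @cons s u hb hu ih =>
      obtain ⟨u', rfl⟩ := List.getLast?_eq_some_iff.1 hu.getLast?_eq
      intro t ht
      rw [← List.append_assoc] at ht
      rw [← List.append_cancel_right ht]
      exact OpenPat.cons hb (ih u' rfl)
  · intro h
    induction h with
    | as k hk => exact Pat.one (Blk.mk k hk)
    | cons hb _ ih => rw [List.append_assoc]; exact Pat.cons hb ih

theorem OpenPat.append_A {t : List Lab} (h : OpenPat t) : OpenPat (t ++ [Lab.A]) := by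
  induction h with
  | as k hk => rw [← List.replicate_succ']; exact OpenPat.as (k + 1) (by omega)
  | cons hb _ ih => rw [List.append_assoc]; exact OpenPat.cons hb ih

theorem Pat.append_A {t : List Lab} (h : Pat t) : OpenPat (t ++ [Lab.A]) := by
  induction h with
  | one hb => exact OpenPat.cons hb (OpenPat.as 1 le_rfl)
  | cons hb _ ih => rw [List.append_assoc]; exact OpenPat.cons hb ih

theorem openPat_append_A_iff {t : List Lab} :
    OpenPat (t ++ [Lab.A]) ↔ t = [] ∨ Pat t ∨ OpenPat t := by
  refine ⟨?_, ?_⟩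
  · suffices ∀ s, OpenPat s → ∀ t, s = t ++ [Lab.A] → t = [] ∨ Pat t ∨ OpenPat t from
      fun h => this _ h t rfl
    intro s hs
    induction hs with
    | as k hk =>
      intro t ht
      obtain ⟨k, rfl⟩ := Nat.exists_eq_add_of_le' hk
      rw [List.replicate_succ', List.append_cancel_right ht.symm] at *
      rcases k with _ | k
      · exact Or.inl rfl
      · exact Or.inr (Or.inr (OpenPat.as (k + 1) (by omega)))
    | @cons s u hb hu ih =>
      obtain ⟨u', rfl⟩ := List.getLast?_eq_some_iff.1 hu.getLast?_eq
      intro t ht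
      rw [← List.append_assoc] at ht
      rw [← List.append_cancel_right ht]
      rcases ih u' rfl with rfl | hu' | hu'
      · exact Or.inr (Or.inl (by simpa using Pat.one hb))
      · exact Or.inr (Or.inl (Pat.cons hb hu'))
      · exact Or.inr (Or.inr (OpenPat.cons hb hu'))
  · rintro (rfl | h | h)
    · exact OpenPat.as 1 le_rfl
    · exact h.append_A
    · exact h.append_A

noncomputable def countOpenSuffixes (p : List Lab) : ℕ := p.tails.countP fun t => OpenPat t

noncomputable def countPatSuffixes (p : List Lab) : ℕ := p.tails.countP fun t => Pat t

noncomputable def countPatInfixes (p : List Lab) : ℕ :=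
  (p.inits.flatMap List.tails).countP fun t => Pat t

theorem countOpenSuffixes_append_singleton (p : List Lab) (x : Lab) :
    countOpenSuffixes (p ++ [x]) =
      if x = Lab.A then countOpenSuffixes p + countPatSuffixes p + 1 else 0 := by
  unfold countOpenSuffixes countPatSuffixes
  rw [List.countP_tails_append_singleton (by simpa using not_openPat_nil)]
  cases x with
  | A =>
    rw [List.countP_congr (q := fun t => (decide (t = []) || decide (Pat t)) || decide (OpenPat t))
        (fun t _ => by simp [openPat_append_A_iff, or_assoc]),
      List.countP_or_eq_add, List.countP_or_eq_add, List.countP_eq_nil_tails]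
    · simp only [if_true]; omega
    · rintro t - ⟨h, hp⟩
      simp_all [not_pat_nil]
    · intro t _
      simp only [Bool.or_eq_true, decide_eq_true_eq]
      rintro ⟨rfl | hp, ho⟩
      exacts [not_openPat_nil ho, hp.not_openPat ho]
  | B | C =>
    simp only [reduceCtorEq, if_false, List.countP_eq_zero, decide_eq_true_eq]
    exact fun t _ h => by simpa [List.getLast?_append] using h.getLast?_eq

theorem countPatSuffixes_append_singleton (p : List Lab) (x : Lab) :
    countPatSuffixes (p ++ [x]) = if x = Lab.B then countOpenSuffixes p else 0 := by
  unfold countOpenSuffixes countPatSuffixes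
  rw [List.countP_tails_append_singleton (by simpa using not_pat_nil)]
  cases x with
  | B => simp only [pat_append_B_iff, if_true]
  | A | C =>
    simp only [reduceCtorEq, if_false, List.countP_eq_zero, decide_eq_true_eq]
    exact fun t _ h => by simpa [List.getLast?_append] using h.getLast?_eq

theorem countPatInfixes_append_singleton (p : List Lab) (x : Lab) :
    countPatInfixes (p ++ [x]) = countPatInfixes p + countPatSuffixes (p ++ [x]) := by
  simp [countPatInfixes, countPatSuffixes]

theorem getLast?_eq_A_of_countOpenSuffixes_ne_zero {p : List Lab}
    (h : countOpenSuffixes p ≠ 0) : p.getLast? = some Lab.A := by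
  rcases List.eq_nil_or_concat p with rfl | ⟨q, x, rfl⟩
  · simp [countOpenSuffixes, not_openPat_nil] at h
  · cases x <;> simp_all [countOpenSuffixes_append_singleton]

theorem getLast?_eq_B_of_countPatSuffixes_ne_zero {p : List Lab}
    (h : countPatSuffixes p ≠ 0) : p.getLast? = some Lab.B := by
  rcases List.eq_nil_or_concat p with rfl | ⟨q, x, rfl⟩
  · simp [countPatSuffixes, not_pat_nil] at h
  · cases x <;> simp_all [countPatSuffixes_append_singleton]

theorem foldl_stepCont (p : List Lab) :
    p.foldl stepCont (none, 0, 0) =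
      (if countOpenSuffixes p + countPatSuffixes p = 0 then none else p.getLast?,
        countOpenSuffixes p + countPatSuffixes p, countPatInfixes p) := by
  induction p using List.reverseRecOn with
  | nil =>
    simp [countOpenSuffixes, countPatSuffixes, countPatInfixes, not_pat_nil, not_openPat_nil]
  | append_singleton p x ih =>
    -- The stored label is tested only when the pending count is nonzero; it is then the last
    -- event, which decides which of the two suffix counts can be nonzero.
    have hA := @getLast?_eq_A_of_countOpenSuffixes_ne_zero p
    have hB := @getLast?_eq_B_of_countPatSuffixes_ne_zero p
    rw [List.foldl_append, ih, countPatInfixes_append_singleton]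
    by_cases ho : countOpenSuffixes p = 0 <;> by_cases hc : countPatSuffixes p = 0 <;>
      cases x <;>
      simp_all [stepCont, countOpenSuffixes_append_singleton, countPatSuffixes_append_singleton] <;>
      omega

theorem countP_contTrend_eq_countPatInfixes (stream : List Lab) :
    (stream.zipIdx.map Prod.swap).sublists.countP
      (fun tr => decide (ContTrend (stream.zipIdx.map Prod.swap) tr)) =
      countPatInfixes stream := by
  set e := stream.zipIdx.map Prod.swap
  have he : e.Nodup := .of_map Prod.fst <| by
    simpa [e, Function.comp_def] using List.nodup_zipIdx_map_snd stream
  have hlabels : e.map Prod.snd = stream := by simp [e, Function.comp_def]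
  calc e.sublists.countP (fun tr => decide (ContTrend e tr))
      = (e.inits.flatMap List.tails).countP (fun tr => decide (ContTrend e tr)) :=
        he.countP_sublists_eq_countP_flatMap_inits_tails (by simp [ContTrend, not_pat_nil])
          (fun t h => (of_decide_eq_true h).1)
    _ = (e.inits.flatMap List.tails).countP (fun tr => decide (Pat (tr.map Prod.snd))) :=
        List.countP_congr fun t ht => by simp [ContTrend, List.mem_flatMap_inits_tails.1 ht]
    _ = countPatInfixes stream := by
        rw [← hlabels, countPatInfixes, List.flatMap_inits_tails_map Prod.snd e, List.countP_map]
        rfl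

/-- For `(SEQ(A+,B))+` under the contiguous semantics, the pattern-grained algorithm
that resets the last-event count upon any non-matching event correctly counts contiguous
trends; on the stream `a1,b2,a3,a4,c5,b6,a7,b8` the final count is `2`. -/
theorem stmt9 :
    (∀ stream : List Lab,
      (stream.foldl stepCont (none, 0, 0)).2.2 =
        (stream.zipIdx.map Prod.swap).sublists.countP
          (fun tr => decide (ContTrend (stream.zipIdx.map Prod.swap) tr))) ∧
    (([Lab.A, Lab.B, Lab.A, Lab.A, Lab.C, Lab.B, Lab.A, Lab.B] : List Lab).foldl
        stepCont (none, 0, 0)).2.2 = 2 :=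
  ⟨fun stream => by rw [foldl_stepCont, countP_contTrend_eq_countPatInfixes],
    by simp [stepCont]⟩
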